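/- Fix α > 0 and let x ∈ 𝒳 be a slowly oscillating periodic solution of Wright's equation x'(t) = -α(e^{x(t-1)} - 1) with q = q(x) and q̄ = q̄(x) ≥ 2. Let ℓ, u : ℝ → ℝ be continuous functions with ℓ(t) ≤ x(t) ≤ u(t) for all t, and let I_q = [q_min, q_max] be a compact interval with q ∈ I_q. Define U⁺ = sup_{q' ∈ I_q} ∫_{q'-1}^{q'} max{e^{u(t)} - 1, 0} dt, L⁺ = inf_{q' ∈ I_q} ∫_{q'-1}^{q'} max{e^{ℓ(t)} - 1, 0} dt, U₁⁻ = sup_{q' ∈ I_q} ∫_{q'}^{q'+1} (-min{e^{ℓ(t)} - 1, 0}) dt, L₁⁻ = inf_{q' ∈ I_q} ∫_{q'}^{q'+1} (-min{e^{u(t)} - 1, 0}) dt, and m = min_{t ∈ I_q} ℓ(t+1). Assume u(-1) < 0 (and note m < 0 follows since m ≤ x(q+1) < 0). Then 2 + (L⁺ - U₁⁻)/|e^m - 1| ≤ q̄ ≤ 2 + (U⁺ - L₁⁻)/|e^{u(-1)} - 1|. -/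

import Mathlib

open Real Set Filter

noncomputable section

/-- `x` solves Wright's equation `x'(t) = -α (e^{x(t-1)} - 1)` on all of `ℝ`. -/
def WrightSol (α : ℝ) (x : ℝ → ℝ) : Prop :=
  ∀ t : ℝ, HasDerivAt x (-α * (Real.exp (x (t - 1)) - 1)) t

/-- The space 𝒳: C¹ functions with `x 0 = 0`, `x' 0 > 0` and `x < 0` on `(-1,0)`. -/
def InX (x : ℝ → ℝ) : Prop :=
  ContDiff ℝ 1 x ∧ x 0 = 0 ∧ 0 < deriv x 0 ∧ ∀ t ∈ Set.Ioo (-1 : ℝ) 0, x t < 0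

/-- A slowly oscillating periodic solution in 𝒳, with first zero `q` and data `qbar`:
positive on `(0,q)`, negative on `(q, q+qbar)`, periodic with minimal period `q+qbar`. -/
def SOPSX (α q qbar : ℝ) (x : ℝ → ℝ) : Prop :=
  InX x ∧ WrightSol α x ∧ 1 < q ∧ 1 < qbar ∧
  (∀ t ∈ Set.Ioo 0 q, 0 < x t) ∧
  (∀ t ∈ Set.Ioo q (q + qbar), x t < 0) ∧
  Function.Periodic x (q + qbar) ∧
  (∀ T : ℝ, 0 < T → Function.Periodic x T → q + qbar ≤ T)

/-- A slowly oscillating periodic solution (up to time translation). -/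
def SOPS (α : ℝ) (x : ℝ → ℝ) : Prop :=
  WrightSol α x ∧
  ∃ q qbar : ℝ, 1 < q ∧ 1 < qbar ∧
    (∃ τ : ℝ, (∀ t ∈ Set.Ioo 0 q, 0 < x (t + τ)) ∧
      (∀ t ∈ Set.Ioo q (q + qbar), x (t + τ) < 0)) ∧
    Function.Periodic x (q + qbar) ∧
    (∀ T : ℝ, 0 < T → Function.Periodic x T → q + qbar ≤ T)

/-! Integrating Wright's equation from `q` to `q + q̄`, where `x` vanishes at both ends, shows
that `e^x - 1` has integral zero over `[q - 1, q + q̄ - 1]`: its positive part on `[q - 1, q]`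
balances its negative part on `[q, q + q̄ - 1]`. On `[q + 1, q + q̄]` the delayed argument lies in
the negative hump, so `x` is nondecreasing there and, on `[q + 1, q + q̄ - 1]`, is squeezed between
`x (q + 1) ≥ m` and `x (q + q̄ - 1) = x (-1) ≤ u (-1)`. The integral over that stretch of length
`q̄ - 2` is therefore comparable to `(q̄ - 2) |e^m - 1|` and `(q̄ - 2) |e^{u(-1)} - 1|`; the two
unit-length pieces next to `q` are estimated through the enclosure `ℓ ≤ x ≤ u`. -/

open MeasureTheory intervalIntegral

lemma nonneg_of_mem_Icc_of_pos_on_Ioo {f : ℝ → ℝ} (hf : Continuous f) {a b : ℝ} (hab : a < b)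
    (hpos : ∀ t ∈ Ioo a b, 0 < f t) : ∀ t ∈ Icc a b, 0 ≤ f t := by
  rw [← closure_Ioo hab.ne]
  exact closure_minimal (fun t ht => (hpos t ht).le) (isClosed_le continuous_const hf)

lemma nonpos_of_mem_Icc_of_neg_on_Ioo {f : ℝ → ℝ} (hf : Continuous f) {a b : ℝ} (hab : a < b)
    (hneg : ∀ t ∈ Ioo a b, f t < 0) : ∀ t ∈ Icc a b, f t ≤ 0 := by
  rw [← closure_Ioo hab.ne]
  exact closure_minimal (fun t ht => (hneg t ht).le) (isClosed_le hf continuous_const)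

@[fun_prop]
lemma Continuous.intervalIntegral_of_bounds {f lo hi : ℝ → ℝ} (hf : Continuous f)
    (hlo : Continuous lo) (hhi : Continuous hi) :
    Continuous fun y => ∫ t in lo y..hi y, f t := by
  have hF := continuous_primitive (μ := volume) (fun a b => hf.intervalIntegrable a b) 0
  have h : ∀ y, ∫ t in lo y..hi y, f t = (∫ t in 0..hi y, f t) - ∫ t in 0..lo y, f t := fun y =>
    (integral_interval_sub_left (hf.intervalIntegrable _ _) (hf.intervalIntegrable _ _)).symm
  simp_rw [h]
  exact (hF.comp hhi).sub (hF.comp hlo)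

lemma sub_mul_le_integral {f : ℝ → ℝ} {a b c : ℝ} (hab : a ≤ b)
    (hf : IntervalIntegrable f volume a b)
    (h : ∀ t ∈ Icc a b, c ≤ f t) : (b - a) * c ≤ ∫ t in a..b, f t := by
  simpa [mul_comm] using integral_mono_on hab intervalIntegrable_const hf h

lemma integral_le_sub_mul {f : ℝ → ℝ} {a b c : ℝ} (hab : a ≤ b)
    (hf : IntervalIntegrable f volume a b)
    (h : ∀ t ∈ Icc a b, f t ≤ c) : ∫ t in a..b, f t ≤ (b - a) * c := by
  simpa [mul_comm] using integral_mono_on hab hf intervalIntegrable_const h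

section Enclosure

variable {ℓ x u : ℝ → ℝ} {a b : ℝ}

lemma integral_max_exp_sub_one_le (hab : a ≤ b) (hℓ : Continuous ℓ) (hx : Continuous x)
    (hlx : ℓ ≤ x) (hx0 : ∀ t ∈ Icc a b, 0 ≤ x t) :
    ∫ t in a..b, max (exp (ℓ t) - 1) 0 ≤ ∫ t in a..b, (exp (x t) - 1) := by
  refine integral_mono_on hab (Continuous.intervalIntegrable (by fun_prop) _ _)
    (Continuous.intervalIntegrable (by fun_prop) _ _) fun t ht => ?_
  exact max_le (by gcongr; exact hlx t) (sub_nonneg.2 (one_le_exp (hx0 t ht)))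

lemma integral_exp_sub_one_le_max (hab : a ≤ b) (hx : Continuous x) (hu : Continuous u)
    (hxu : x ≤ u) :
    ∫ t in a..b, (exp (x t) - 1) ≤ ∫ t in a..b, max (exp (u t) - 1) 0 := by
  refine integral_mono_on hab (Continuous.intervalIntegrable (by fun_prop) _ _)
    (Continuous.intervalIntegrable (by fun_prop) _ _) fun t _ => ?_
  exact le_max_of_le_left (by gcongr; exact hxu t)

lemma integral_neg_min_exp_sub_one_le (hab : a ≤ b) (hx : Continuous x) (hu : Continuous u)
    (hxu : x ≤ u) (hx0 : ∀ t ∈ Icc a b, x t ≤ 0) :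
    ∫ t in a..b, -min (exp (u t) - 1) 0 ≤ ∫ t in a..b, (1 - exp (x t)) := by
  refine integral_mono_on hab (Continuous.intervalIntegrable (by fun_prop) _ _)
    (Continuous.intervalIntegrable (by fun_prop) _ _) fun t ht => ?_
  have : exp (x t) - 1 ≤ min (exp (u t) - 1) 0 :=
    le_min (by gcongr; exact hxu t) (sub_nonpos.2 (exp_le_one_iff.2 (hx0 t ht)))
  linarith

lemma integral_one_sub_exp_le_neg_min (hab : a ≤ b) (hℓ : Continuous ℓ) (hx : Continuous x)
    (hlx : ℓ ≤ x) :
    ∫ t in a..b, (1 - exp (x t)) ≤ ∫ t in a..b, -min (exp (ℓ t) - 1) 0 := by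
  refine integral_mono_on hab (Continuous.intervalIntegrable (by fun_prop) _ _)
    (Continuous.intervalIntegrable (by fun_prop) _ _) fun t _ => ?_
  have : min (exp (ℓ t) - 1) 0 ≤ exp (x t) - 1 := min_le_of_left_le (by gcongr; exact hlx t)
  linarith

end Enclosure

namespace WrightSol

variable {α : ℝ} {x : ℝ → ℝ}

lemma continuous (hx : WrightSol α x) : Continuous x :=
  continuous_iff_continuousAt.2 fun t => (hx t).continuousAt

lemma sub_eq_integral (hx : WrightSol α x) (a b : ℝ) :
    x b - x a = -α * ∫ s in (a - 1)..(b - 1), (exp (x s) - 1) := by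
  have hcont : Continuous fun t => -α * (exp (x (t - 1)) - 1) := by
    have := hx.continuous; fun_prop
  rw [← integral_comp_sub_right (fun s => exp (x s) - 1) 1, ← intervalIntegral.integral_const_mul]
  exact (integral_eq_sub_of_hasDerivAt (fun t _ => hx t) (hcont.intervalIntegrable a b)).symm

lemma integral_eq_zero_of_eq (hx : WrightSol α x) (hα : α ≠ 0) {a b : ℝ} (hab : x a = x b) :
    ∫ s in (a - 1)..(b - 1), (exp (x s) - 1) = 0 := by
  have h := hx.sub_eq_integral a b
  rw [hab, sub_self, eq_comm, mul_eq_zero] at h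
  exact h.resolve_left (neg_ne_zero.2 hα)

lemma monotoneOn_of_nonpos (hx : WrightSol α x) (hα : 0 ≤ α) {a b : ℝ}
    (hneg : ∀ s ∈ Icc (a - 1) (b - 1), x s ≤ 0) : MonotoneOn x (Icc a b) := by
  refine monotoneOn_of_deriv_nonneg (convex_Icc a b) hx.continuous.continuousOn
    (fun t _ => (hx t).differentiableAt.differentiableWithinAt) fun t ht => ?_
  rw [interior_Icc] at ht
  rw [(hx t).deriv]
  have : exp (x (t - 1)) ≤ 1 := exp_le_one_iff.2 (hneg _ ⟨by linarith [ht.1], by linarith [ht.2]⟩)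
  nlinarith

end WrightSol

namespace SOPSX

variable {α q qbar : ℝ} {x : ℝ → ℝ}

lemma nonneg_of_mem_Icc (hx : SOPSX α q qbar x) : ∀ t ∈ Icc 0 q, 0 ≤ x t := by
  obtain ⟨-, hW, hq, -, hpos, -⟩ := hx
  exact nonneg_of_mem_Icc_of_pos_on_Ioo hW.continuous (by linarith) hpos

lemma nonpos_of_mem_Icc (hx : SOPSX α q qbar x) : ∀ t ∈ Icc q (q + qbar), x t ≤ 0 := by
  obtain ⟨-, hW, -, hqbar, -, hneg, -⟩ := hx
  exact nonpos_of_mem_Icc_of_neg_on_Ioo hW.continuous (by linarith) hneg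

lemma apply_q (hx : SOPSX α q qbar x) : x q = 0 := by
  have hq : 1 < q := hx.2.2.1
  have hqbar : 1 < qbar := hx.2.2.2.1
  exact le_antisymm (hx.nonpos_of_mem_Icc q ⟨le_rfl, by linarith⟩)
    (hx.nonneg_of_mem_Icc q ⟨by linarith, le_rfl⟩)

lemma apply_q_add_qbar (hx : SOPSX α q qbar x) : x (q + qbar) = 0 := by
  obtain ⟨⟨-, hx0, -⟩, -, -, -, -, -, hper, -⟩ := hx
  simpa [hx0] using hper 0

lemma apply_q_add_one_neg (hx : SOPSX α q qbar x) : x (q + 1) < 0 := by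
  obtain ⟨-, -, -, hqbar, -, hneg, -⟩ := hx
  exact hneg _ ⟨by linarith, by linarith⟩

lemma integral_exp_sub_one_eq (hx : SOPSX α q qbar x) (hα : α ≠ 0) :
    ∫ s in (q - 1)..q, (exp (x s) - 1) =
      (∫ s in q..(q + 1), (1 - exp (x s))) + ∫ s in (q + 1)..(q + qbar - 1), (1 - exp (x s)) := by
  have hW : WrightSol α x := hx.2.1
  have hzero := hW.integral_eq_zero_of_eq hα (hx.apply_q.trans hx.apply_q_add_qbar.symm)
  have hint : ∀ a b : ℝ, IntervalIntegrable (fun s => exp (x s) - 1) volume a b := by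
    have := hW.continuous
    exact fun a b => Continuous.intervalIntegrable (by fun_prop) a b
  simp only [← neg_sub (exp (x _)), intervalIntegral.integral_neg]
  rw [← integral_add_adjacent_intervals (hint _ q) (hint q _),
    ← integral_add_adjacent_intervals (hint q (q + 1)) (hint _ _)] at hzero
  linarith

/-- On `[q + 1, q + q̄ - 1]`, `x` climbs from `x (q + 1)` up to `x (q + q̄ - 1) = x (-1)`. -/
lemma integral_one_sub_exp_bounds (hx : SOPSX α q qbar x) (hα : 0 ≤ α) (hqbar : 2 ≤ qbar)
    {c d : ℝ} (hc : c ≤ x (q + 1)) (hd : x (-1) ≤ d) :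
    (qbar - 2) * (1 - exp d) ≤ ∫ s in (q + 1)..(q + qbar - 1), (1 - exp (x s)) ∧
      ∫ s in (q + 1)..(q + qbar - 1), (1 - exp (x s)) ≤ (qbar - 2) * (1 - exp c) := by
  have hW : WrightSol α x := hx.2.1
  have hper : Function.Periodic x (q + qbar) := hx.2.2.2.2.2.2.1
  have hmono : MonotoneOn x (Icc (q + 1) (q + qbar)) :=
    hW.monotoneOn_of_nonpos hα fun s hs =>
      hx.nonpos_of_mem_Icc s ⟨by linarith [hs.1], by linarith [hs.2]⟩
  have hend : x (q + qbar - 1) = x (-1) := by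
    simpa [add_comm, ← sub_eq_add_neg] using hper (-1)
  have hint : IntervalIntegrable (fun s => 1 - exp (x s)) volume (q + 1) (q + qbar - 1) := by
    have := hW.continuous
    exact Continuous.intervalIntegrable (by fun_prop) _ _
  have hlen : q + qbar - 1 - (q + 1) = qbar - 2 := by ring
  constructor
  · refine hlen ▸ sub_mul_le_integral (by linarith) hint fun s hs => ?_
    have : x s ≤ x (q + qbar - 1) :=
      hmono ⟨hs.1, by linarith [hs.2]⟩ ⟨by linarith, by linarith⟩ hs.2
    gcongr
    linarith
  · refine hlen ▸ integral_le_sub_mul (by linarith) hint fun s hs => ?_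
    have : x (q + 1) ≤ x s :=
      hmono ⟨le_rfl, by linarith⟩ ⟨hs.1, by linarith [hs.2]⟩ hs.1
    gcongr
    linarith

lemma enclosure_bounds (hx : SOPSX α q qbar x) (hα : 0 < α) (hqbar : 2 ≤ qbar) {ℓ u : ℝ → ℝ}
    (hℓ : Continuous ℓ) (hu : Continuous u) (hlx : ℓ ≤ x) (hxu : x ≤ u) {c : ℝ}
    (hc : c ≤ x (q + 1)) :
    (∫ t in (q - 1)..q, max (exp (ℓ t) - 1) 0) - ∫ t in q..(q + 1), -min (exp (ℓ t) - 1) 0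
        ≤ (qbar - 2) * (1 - exp c) ∧
      (qbar - 2) * (1 - exp (u (-1)))
        ≤ (∫ t in (q - 1)..q, max (exp (u t) - 1) 0) -
          ∫ t in q..(q + 1), -min (exp (u t) - 1) 0 := by
  have hxc : Continuous x := hx.2.1.continuous
  have hq : 1 < q := hx.2.2.1
  have hx_nonneg : ∀ t ∈ Icc (q - 1) q, 0 ≤ x t := fun t ht =>
    hx.nonneg_of_mem_Icc t ⟨by linarith [ht.1], ht.2⟩
  have hx_nonpos : ∀ t ∈ Icc q (q + 1), x t ≤ 0 := fun t ht =>
    hx.nonpos_of_mem_Icc t ⟨ht.1, by linarith [ht.2]⟩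
  obtain ⟨hmid_lb, hmid_ub⟩ := hx.integral_one_sub_exp_bounds hα.le hqbar hc (hxu (-1))
  have hbalance := hx.integral_exp_sub_one_eq hα.ne'
  have := integral_max_exp_sub_one_le (by linarith) hℓ hxc hlx hx_nonneg
  have := integral_exp_sub_one_le_max (a := q - 1) (b := q) (by linarith) hxc hu hxu
  have := integral_neg_min_exp_sub_one_le (by linarith) hxc hu hxu hx_nonpos
  have := integral_one_sub_exp_le_neg_min (a := q) (b := q + 1) (by linarith) hℓ hxc hlx
  constructor <;> linarith

end SOPSX

theorem period_bound_general (α q qbar qmin qmax : ℝ) (x ℓ u : ℝ → ℝ)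
    (Uplus Lplus Uminus₁ Lminus₁ m : ℝ)
    (hα : 0 < α) (hx : SOPSX α q qbar x) (hqbar : 2 ≤ qbar)
    (hℓ : Continuous ℓ) (hu : Continuous u)
    (hlx : ∀ t : ℝ, ℓ t ≤ x t) (hxu : ∀ t : ℝ, x t ≤ u t)
    (hq : q ∈ Set.Icc qmin qmax)
    (hUplus : Uplus = sSup ((fun q' => ∫ t in (q' - 1)..q', max (Real.exp (u t) - 1) 0) ''
      Set.Icc qmin qmax))
    (hLplus : Lplus = sInf ((fun q' => ∫ t in (q' - 1)..q', max (Real.exp (ℓ t) - 1) 0) ''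
      Set.Icc qmin qmax))
    (hUminus₁ : Uminus₁ = sSup ((fun q' => ∫ t in q'..(q' + 1), -(min (Real.exp (ℓ t) - 1) 0)) ''
      Set.Icc qmin qmax))
    (hLminus₁ : Lminus₁ = sInf ((fun q' => ∫ t in q'..(q' + 1), -(min (Real.exp (u t) - 1) 0)) ''
      Set.Icc qmin qmax))
    (hm : m = sInf ((fun t => ℓ (t + 1)) '' Set.Icc qmin qmax))
    (hu1 : u (-1) < 0) :
    2 + (Lplus - Uminus₁) / |Real.exp m - 1| ≤ qbar ∧
    qbar ≤ 2 + (Uplus - Lminus₁) / |Real.exp (u (-1)) - 1| := by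
  have hUp : ∫ t in (q - 1)..q, max (exp (u t) - 1) 0 ≤ Uplus :=
    hUplus ▸ le_csSup (isCompact_Icc.bddAbove_image (Continuous.continuousOn (by fun_prop)))
      ⟨q, hq, rfl⟩
  have hLp : Lplus ≤ ∫ t in (q - 1)..q, max (exp (ℓ t) - 1) 0 :=
    hLplus ▸ csInf_le (isCompact_Icc.bddBelow_image (Continuous.continuousOn (by fun_prop)))
      ⟨q, hq, rfl⟩
  have hUm : ∫ t in q..(q + 1), -min (exp (ℓ t) - 1) 0 ≤ Uminus₁ :=
    hUminus₁ ▸ le_csSup (isCompact_Icc.bddAbove_image (Continuous.continuousOn (by fun_prop)))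
      ⟨q, hq, rfl⟩
  have hLm : Lminus₁ ≤ ∫ t in q..(q + 1), -min (exp (u t) - 1) 0 :=
    hLminus₁ ▸ csInf_le (isCompact_Icc.bddBelow_image (Continuous.continuousOn (by fun_prop)))
      ⟨q, hq, rfl⟩
  have hm_le : m ≤ x (q + 1) := by
    refine le_trans ?_ (hlx (q + 1))
    rw [hm]
    exact csInf_le (isCompact_Icc.bddBelow_image (by fun_prop)) ⟨q, hq, rfl⟩
  have hm_neg : m < 0 := hm_le.trans_lt hx.apply_q_add_one_neg
  obtain ⟨hlower, hupper⟩ := hx.enclosure_bounds hα hqbar hℓ hu hlx hxu hm_le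
  have hpos_m : 0 < 1 - exp m := sub_pos.2 (exp_lt_one_iff.2 hm_neg)
  have hpos_u : 0 < 1 - exp (u (-1)) := sub_pos.2 (exp_lt_one_iff.2 hu1)
  rw [abs_sub_comm, abs_of_pos hpos_m, abs_sub_comm, abs_of_pos hpos_u]
  constructor
  · rw [← le_sub_iff_add_le', div_le_iff₀ hpos_m]
    linarith
  · rw [← sub_le_iff_le_add', le_div_iff₀ hpos_u]
    linarith

theorem period_bound (α q qbar qmin qmax : ℝ) (x ℓ u : ℝ → ℝ)
    (Uplus Lplus Uminus₁ Lminus₁ m : ℝ)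
    (hα : 0 < α) (hx : SOPSX α q qbar x) (hqbar : 2 ≤ qbar)
    (hℓ : Continuous ℓ) (hu : Continuous u)
    (hlx : ∀ t : ℝ, ℓ t ≤ x t) (hxu : ∀ t : ℝ, x t ≤ u t)
    (hqi : qmin ≤ qmax) (hq : q ∈ Set.Icc qmin qmax)
    (hUplus : Uplus = sSup ((fun q' => ∫ t in (q' - 1)..q', max (Real.exp (u t) - 1) 0) ''
      Set.Icc qmin qmax))
    (hLplus : Lplus = sInf ((fun q' => ∫ t in (q' - 1)..q', max (Real.exp (ℓ t) - 1) 0) ''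
      Set.Icc qmin qmax))
    (hUminus₁ : Uminus₁ = sSup ((fun q' => ∫ t in q'..(q' + 1), -(min (Real.exp (ℓ t) - 1) 0)) ''
      Set.Icc qmin qmax))
    (hLminus₁ : Lminus₁ = sInf ((fun q' => ∫ t in q'..(q' + 1), -(min (Real.exp (u t) - 1) 0)) ''
      Set.Icc qmin qmax))
    (hm : m = sInf ((fun t => ℓ (t + 1)) '' Set.Icc qmin qmax))
    (hu1 : u (-1) < 0) :
    2 + (Lplus - Uminus₁) / |Real.exp m - 1| ≤ qbar ∧
    qbar ≤ 2 + (Uplus - Lminus₁) / |Real.exp (u (-1)) - 1| :=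
  period_bound_general α q qbar qmin qmax x ℓ u Uplus Lplus Uminus₁ Lminus₁ m hα hx hqbar hℓ hu hlx
    hxu hq hUplus hLplus hUminus₁ hLminus₁ hm hu1
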